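/- Let Φ be a monotone NAE-3-SAT instance in which each variable occurs in exactly four clauses, and let G(Φ) be the edge-colored graph constructed from Φ. If Φ has a not-all-equal truth assignment, then the edge set of G(Φ) can be partitioned into two rainbow spanning trees. -/

import Mathlib

namespace PackingRainbowStmt1

/-- An edge of the multigraph connects via set `F`: there is an edge in `F` with
endpoints `a` and `b`. -/
def Step {V E : Type*} (ends : E → Sym2 V) (F : Set E) (a b : V) : Prop :=
  ∃ e ∈ F, ends e = s(a, b)

/-- The edge set `F` makes the multigraph with endpoint map `ends` connected
(any two vertices are joined by a walk using edges of `F`). -/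
def Connects {V E : Type*} (ends : E → Sym2 V) (F : Set E) : Prop :=
  ∀ a b : V, Relation.ReflTransGen (Step ends F) a b

/-- `F` is a spanning tree: it connects all vertices, minimally so. -/
def IsSpanningTree {V E : Type*} (ends : E → Sym2 V) (F : Set E) : Prop :=
  Connects ends F ∧ ∀ e ∈ F, ¬ Connects ends (F \ {e})

/-- `F` is rainbow: each color class contains at most one edge of `F`. -/
def Rainbow {E C : Type*} (color : E → C) (F : Set E) : Prop :=
  ∀ e ∈ F, ∀ f ∈ F, color e = color f → e = f

/-- A monotone NAE-3-SAT instance with `n` variables and `m` clauses in which every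
clause contains three distinct variables and every variable occurs in exactly four
clauses.  `occ (j, q) = (i, p)` means that the `q`-th variable of clause `j` is the
variable `i`, and that this is the `p`-th occurrence of `i` in the order of the
clauses.  Bijectivity of `occ` encodes that every variable occurs exactly four times. -/
structure NAE4Instance (n m : ℕ) where
  occ : (Fin m × Fin 3) ≃ (Fin n × Fin 4)
  distinct : ∀ j : Fin m, Function.Injective fun q : Fin 3 => (occ (j, q)).1
  mono : ∀ j q j' q', (occ (j, q)).1 = (occ (j', q')).1 →
    Prod.Lex (· < ·) (· < ·) (j, q) (j', q') → (occ (j, q)).2 < (occ (j', q')).2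

/-- `Φ` has a not-all-equal truth assignment: every clause contains
at least one true and at least one false variable. -/
def HasNAEAssignment {n m : ℕ} (Φ : NAE4Instance n m) : Prop :=
  ∃ a : Fin n → Bool, ∀ j : Fin m,
    (∃ q : Fin 3, a (Φ.occ (j, q)).1 = true) ∧ (∃ q : Fin 3, a (Φ.occ (j, q)).1 = false)

/-- Vertices of the graph `G(Φ)`: for every variable `i` and `p ∈ [4]` the four
vertices `u i p, v i p, w i p, z i p` of a `K₄`; for every clause `j` the triangle
vertices `c j q`; and the extra vertex `r`. -/
inductive Vtx (n m : ℕ) where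
  | u (i : Fin n) (p : Fin 4)
  | v (i : Fin n) (p : Fin 4)
  | w (i : Fin n) (p : Fin 4)
  | z (i : Fin n) (p : Fin 4)
  | c (j : Fin m) (q : Fin 3)
  | r
  deriving DecidableEq, Fintype

/-- Edges of `G(Φ)`: the six edges of each `K₄`; the triangle edges
`c j q — c j (q+1)`; the edges `z^{i_q}_ℓ — c j q`; and two parallel
edges between `r` and each `u i p`. -/
inductive Edg (n m : ℕ) where
  | uv (i : Fin n) (p : Fin 4)
  | uw (i : Fin n) (p : Fin 4)
  | uz (i : Fin n) (p : Fin 4)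
  | vw (i : Fin n) (p : Fin 4)
  | vz (i : Fin n) (p : Fin 4)
  | wz (i : Fin n) (p : Fin 4)
  | tri (j : Fin m) (q : Fin 3)
  | zc (j : Fin m) (q : Fin 3)
  | ru (i : Fin n) (p : Fin 4) (b : Fin 2)
  deriving DecidableEq, Fintype

/-- The colors of the edge-coloring of `G(Φ)`. -/
inductive Col (n m : ℕ) where
  | rpar (i : Fin n) (p : Fin 4)
  | ca (i : Fin n) (p : Fin 4)
  | cb (i : Fin n) (p : Fin 4)
  | cc (i : Fin n) (p : Fin 4)
  | cd (i : Fin n) (p : Fin 4)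
  deriving DecidableEq, Fintype

/-- Endpoints of the edges of `G(Φ)`. -/
def ends {n m : ℕ} (Φ : NAE4Instance n m) : Edg n m → Sym2 (Vtx n m)
  | .uv i p => s(.u i p, .v i p)
  | .uw i p => s(.u i p, .w i p)
  | .uz i p => s(.u i p, .z i p)
  | .vw i p => s(.v i p, .w i p)
  | .vz i p => s(.v i p, .z i p)
  | .wz i p => s(.w i p, .z i p)
  | .tri j q => s(.c j q, .c j (q + 1))
  | .zc j q => s(.z (Φ.occ (j, q)).1 (Φ.occ (j, q)).2, .c j q)
  | .ru i p _ => s(.r, .u i p)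

/-- The edge-coloring of `G(Φ)`: the two parallel edges at `r` to `u i p` form the
class `rpar i p`; the classes corresponding to variable `i` and `p ∈ [4]` are
`ca i p = {w^i_p z^i_p, z^i_p c^{j_p}_{q_p}}`, `cb i p = {v^i_p z^i_p, u^i_{p+1} v^i_{p+1}}`,
`cc i p = {u^i_p z^i_p, v^i_p w^i_p}` and `cd i p = {u^i_p w^i_p, c^{j_p}_{q_p} c^{j_p}_{q_p+1}}`,
where `c^{j_p}_{q_p}` is the triangle neighbor of `z^i_p`, i.e. `(j_p, q_p) = Φ.occ.symm (i, p)`. -/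
def color {n m : ℕ} (Φ : NAE4Instance n m) : Edg n m → Col n m
  | .ru i p _ => .rpar i p
  | .wz i p => .ca i p
  | .zc j q => .ca (Φ.occ (j, q)).1 (Φ.occ (j, q)).2
  | .vz i p => .cb i p
  | .uv i p => .cb i (p - 1)
  | .uz i p => .cc i p
  | .vw i p => .cc i p
  | .uw i p => .cd i p
  | .tri j q => .cd (Φ.occ (j, q)).1 (Φ.occ (j, q)).2

/-- The edge set of `G(Φ)` can be partitioned into the two rainbow
spanning trees `T₁` and `T₂`. -/
def TwoRainbowSpanningTrees {n m : ℕ} (Φ : NAE4Instance n m) (T₁ T₂ : Set (Edg n m)) : Prop :=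
  T₁ ∪ T₂ = Set.univ ∧ Disjoint T₁ T₂ ∧
    IsSpanningTree (ends Φ) T₁ ∧ IsSpanningTree (ends Φ) T₂ ∧
    Rainbow (color Φ) T₁ ∧ Rainbow (color Φ) T₂

/-!
An assignment `b` satisfying every clause determines a spanning tree `T(b)` of `G(Φ)`: the
parallel edges of one index at `r`, and in each gadget the edges selected by the truth value
of its variable. Every vertex other than `r` has a unique parent edge in `T(b)`, and the
parents lead to `r` because the walk around a clause triangle stops at a true variable.
If `a` is a not-all-equal assignment, both `a` and `¬a` satisfy every clause; `T(a)` and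
`T(¬a)` (with the other parallel edges) are complementary. Each color class consists of two
edges selected by opposite truth values of the same variable (or two parallel edges), so
both trees are rainbow.
-/

section ParentFunction

variable {V E : Type*} {ends : E → Sym2 V} {F : Set E}

instance : Std.Symm (Step ends F) where
  symm _ _ := fun ⟨e, he, hends⟩ => ⟨e, he, hends.trans Sym2.eq_swap⟩

lemma exists_iterate_eq_of_measure_lt {par : V → V} {root : V} (μ : V → ℕ)
    (hμ : ∀ x, x ≠ root → μ (par x) < μ x) (x : V) : ∃ K, par^[K] x = root := by
  induction hx : μ x using Nat.strong_induction_on generalizing x with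
  | _ d ih =>
    by_cases hroot : x = root
    · exact ⟨0, hroot⟩
    · obtain ⟨K, hK⟩ := ih _ (hx ▸ hμ x hroot) (par x) rfl
      exact ⟨K + 1, hK⟩

lemma connects_of_parent (root : V) (par : V → V) (hreach : ∀ x, ∃ K, par^[K] x = root)
    (hedge : ∀ x, x ≠ root → Step ends F x (par x)) : Connects ends F := by
  have toRoot : ∀ K x, par^[K] x = root → Relation.ReflTransGen (Step ends F) x root := by
    intro K
    induction K with
    | zero => rintro x rfl; rfl
    | succ K ih =>
      intro x hx
      by_cases hroot : x = root
      · rw [hroot]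
      · exact .head (hedge x hroot) (ih _ hx)
  intro a b
  obtain ⟨Ka, ha⟩ := hreach a
  obtain ⟨Kb, hb⟩ := hreach b
  exact (toRoot Ka a ha).trans (Std.Symm.symm _ _ (toRoot Kb b hb))

/-- Every edge other than `e` joins two descendants of `x₀ := child e` or two
non-descendants. So a walk avoiding `e` would make `par x₀` a descendant of `x₀`, i.e. `x₀`
periodic under `par`, although its orbit reaches the fixed point `root ≠ x₀`. -/
lemma not_connects_diff_of_parent (root : V) (par : V → V) (child : E → V)
    (hroot : par root = root) (hreach : ∀ x, ∃ K, par^[K] x = root)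
    (hends : ∀ e ∈ F, ends e = s(child e, par (child e)))
    (hchild : ∀ e ∈ F, child e ≠ root) (hinj : Set.InjOn child F) {e : E} (he : e ∈ F) :
    ¬ Connects ends (F \ {e}) := by
  intro hconn
  set x₀ := child e
  let Desc : V → Prop := fun y => ∃ K, par^[K] y = x₀
  have desc_par_iff {y : V} (hy : y ≠ x₀) : Desc (par y) ↔ Desc y :=
    ⟨fun ⟨K, hK⟩ => ⟨K + 1, hK⟩, fun
      | ⟨0, hK⟩ => absurd hK hy
      | ⟨K + 1, hK⟩ => ⟨K, hK⟩⟩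
  have desc_walk {y z : V} (hyz : Relation.ReflTransGen (Step ends (F \ {e})) y z)
      (hy : Desc y) : Desc z := by
    induction hyz with
    | refl => exact hy
    | tail _ hstep ih =>
      obtain ⟨f, ⟨hf, hfe⟩, hfends⟩ := hstep
      have hne : child f ≠ x₀ := fun h => hfe (hinj hf he h)
      rw [hends f hf] at hfends
      rcases Sym2.eq_iff.mp hfends with ⟨h₁, h₂⟩ | ⟨h₁, h₂⟩
      · subst h₁ h₂; exact (desc_par_iff hne).mpr ih
      · subst h₁ h₂; exact (desc_par_iff hne).mp ih
  obtain ⟨K, hK⟩ := desc_walk (hconn x₀ (par x₀)) ⟨0, rfl⟩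
  have hperiodic : Function.IsPeriodicPt par (K + 1) x₀ := hK
  obtain ⟨N, hN⟩ := hreach x₀
  refine hchild e he (calc
    x₀ = par^[K * N + N] x₀ := by
      rw [← Nat.succ_mul]; exact ((hperiodic.mul_const N).eq).symm
    _ = root := by rw [Function.iterate_add_apply, hN, Function.iterate_fixed hroot])

theorem isSpanningTree_of_parent (root : V) (par : V → V) (child : E → V)
    (hroot : par root = root) (hreach : ∀ x, ∃ K, par^[K] x = root)
    (hends : ∀ e ∈ F, ends e = s(child e, par (child e)))
    (hchild : ∀ e ∈ F, child e ≠ root) (hinj : Set.InjOn child F)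
    (hsurj : ∀ x, x ≠ root → ∃ e ∈ F, child e = x) : IsSpanningTree ends F := by
  refine ⟨connects_of_parent root par hreach fun x hx => ?_,
    fun e he => not_connects_diff_of_parent root par child hroot hreach hends hchild hinj he⟩
  obtain ⟨e, he, rfl⟩ := hsurj x hx
  exact ⟨e, he, hends e he⟩

end ParentFunction

section Construction

variable {n m : ℕ} (Φ : NAE4Instance n m) (b : Fin n → Bool) (k : Fin 2)

def Satisfies : Prop := ∀ j, ∃ q, b (Φ.occ (j, q)).1 = true

def tree : Set (Edg n m) := {e | match e with
  | .ru _ _ l => l = k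
  | .uz i _ | .uw i _ | .vz i _ => b i = true
  | .uv i _ | .vw i _ | .wz i _ => b i = false
  | .zc j q => b (Φ.occ (j, q)).1 = true
  | .tri j q => b (Φ.occ (j, q)).1 = false}

def parent : Vtx n m → Vtx n m
  | .r | .u _ _ => .r
  | .v i p => if b i then .z i p else .u i p
  | .w i p => if b i then .u i p else .v i p
  | .z i p => if b i then .u i p else .w i p
  | .c j q => if b (Φ.occ (j, q)).1 then .z (Φ.occ (j, q)).1 (Φ.occ (j, q)).2
      else .c j (q + 1)

/-- The endpoint farther from `r`, in every `tree Φ b k` containing the edge. -/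
def child : Edg n m → Vtx n m
  | .uv i p | .vz i p => .v i p
  | .uw i p | .vw i p => .w i p
  | .uz i p | .wz i p => .z i p
  | .tri j q | .zc j q => .c j q
  | .ru i p _ => .u i p

/-- Decreases along `parent` when `b` satisfies `Φ`: walking around a clause triangle, the
parent pointers reach a true variable within two steps. -/
def depth : Vtx n m → ℕ
  | .r => 0
  | .u _ _ => 1
  | .v i _ => if b i then 3 else 2
  | .w i _ => if b i then 2 else 3
  | .z i _ => if b i then 2 else 4
  | .c j q => if b (Φ.occ (j, q)).1 then 3 else if b (Φ.occ (j, q + 1)).1 then 4 else 5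

lemma clause_true_within_two (hb : Satisfies Φ b) (j : Fin m) (q : Fin 3) :
    b (Φ.occ (j, q)).1 = true ∨ b (Φ.occ (j, q + 1)).1 = true ∨
      b (Φ.occ (j, q + 1 + 1)).1 = true := by
  obtain ⟨q', hq'⟩ := hb j
  have hcover : ∀ q q' : Fin 3, q' = q ∨ q' = q + 1 ∨ q' = q + 1 + 1 := by decide
  rcases hcover q q' with rfl | rfl | rfl <;> simp [hq']

lemma depth_parent_lt (hb : Satisfies Φ b) :
    ∀ x, x ≠ .r → depth Φ b (parent Φ b x) < depth Φ b x
  | .r, h => absurd rfl h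
  | .u _ _, _ => by simp [parent, depth]
  | .v i _, _ | .w i _, _ | .z i _, _ => by cases h : b i <;> simp [parent, depth, h]
  | .c j q, _ => by
    rcases clause_true_within_two Φ b hb j q with h | h | h <;>
      by_cases h0 : b (Φ.occ (j, q)).1 <;> by_cases h1 : b (Φ.occ (j, q + 1)).1 <;>
      simp_all [parent, depth]

lemma ends_eq_of_mem_tree :
    ∀ e ∈ tree Φ b k, ends Φ e = s(child e, parent Φ b (child e)) := by
  intro e he
  cases e <;> simp_all [tree, ends, child, parent, Sym2.eq_swap]

lemma child_ne_r (e : Edg n m) : child e ≠ .r := by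
  cases e <;> simp [child]

lemma injOn_child : Set.InjOn child (tree Φ b k) := by
  intro e he f hf hef
  cases e <;> cases f <;> simp_all [tree, child]

lemma exists_mem_tree_child_eq : ∀ x, x ≠ .r → ∃ e ∈ tree Φ b k, child e = x
  | .r, h => absurd rfl h
  | .u i p, _ => ⟨.ru i p k, rfl, rfl⟩
  | .v i p, _ => by cases h : b i; exacts [⟨.uv i p, h, rfl⟩, ⟨.vz i p, h, rfl⟩]
  | .w i p, _ => by cases h : b i; exacts [⟨.vw i p, h, rfl⟩, ⟨.uw i p, h, rfl⟩]
  | .z i p, _ => by cases h : b i; exacts [⟨.wz i p, h, rfl⟩, ⟨.uz i p, h, rfl⟩]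
  | .c j q, _ => by
    cases h : b (Φ.occ (j, q)).1; exacts [⟨.tri j q, h, rfl⟩, ⟨.zc j q, h, rfl⟩]

theorem isSpanningTree_tree (hb : Satisfies Φ b) :
    IsSpanningTree (ends Φ) (tree Φ b k) :=
  isSpanningTree_of_parent .r (parent Φ b) child rfl
    (exists_iterate_eq_of_measure_lt (depth Φ b) (depth_parent_lt Φ b hb))
    (ends_eq_of_mem_tree Φ b k) (fun e _ => child_ne_r e) (injOn_child Φ b k)
    (exists_mem_tree_child_eq Φ b k)

theorem rainbow_tree : Rainbow (color Φ) (tree Φ b k) := by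
  intro e he f hf hef
  cases e <;> cases f <;> simp_all [tree, color, ← Prod.ext_iff]

lemma tree_not_add_one_eq_compl : tree Φ (fun i => !b i) (k + 1) = (tree Φ b k)ᶜ := by
  have hFin2 : ∀ l : Fin 2, l = k + 1 ↔ l ≠ k := by revert k; decide
  ext e
  cases e <;> simp [tree, hFin2]

end Construction

/-- If `Φ` has a not-all-equal truth assignment, then the edge set of
the edge-colored graph `G(Φ)` can be partitioned into two rainbow spanning trees. -/
theorem two_rainbow_spanning_trees_of_nae {n m : ℕ} (Φ : NAE4Instance n m)
    (h : HasNAEAssignment Φ) :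
    ∃ T₁ T₂ : Set (Edg n m), TwoRainbowSpanningTrees Φ T₁ T₂ := by
  obtain ⟨a, ha⟩ := h
  have hsat : Satisfies Φ a := fun j => (ha j).1
  have hsat_not : Satisfies Φ (fun i => !a i) := fun j => by
    obtain ⟨q, hq⟩ := (ha j).2
    exact ⟨q, by simp [hq]⟩
  have hcompl : tree Φ (fun i => !a i) 1 = (tree Φ a 0)ᶜ := tree_not_add_one_eq_compl Φ a 0
  refine ⟨tree Φ a 0, tree Φ (fun i => !a i) 1, ?_, ?_, isSpanningTree_tree Φ a 0 hsat,
    isSpanningTree_tree Φ _ 1 hsat_not, rainbow_tree Φ a 0, rainbow_tree Φ _ 1⟩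
  · rw [hcompl, Set.union_compl_self]
  · rw [hcompl]; exact disjoint_compl_right

end PackingRainbowStmt1
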